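/- If T is a tree with at least one edge, then any inclusion i : K_2 ↪ T of an edge induces a homotopy equivalence i_{K_n} : Hom(T, K_n) → Hom(K_2, K_n). -/

import Mathlib

open scoped Topology

/-- A cell of the Lovász `Hom` complex of multihomomorphisms between two graphs,
given by adjacency relations `A` and `B`: a function assigning to each vertex a
nonempty set of vertices such that adjacent vertices get completely adjacent sets. -/
@[ext]
structure HomCell {V W : Type*} (A : V → V → Prop) (B : W → W → Prop) where
  η : V → Set W
  nonempty : ∀ v, (η v).Nonempty
  adj : ∀ ⦃x y⦄, A x y → ∀ a ∈ η x, ∀ b ∈ η y, B a b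

namespace HomCell

variable {U V W : Type*} {A : V → V → Prop} {B : W → W → Prop}

theorem eta_injective : Function.Injective (HomCell.η (A := A) (B := B)) := by
  rintro ⟨f, _, _⟩ ⟨g, _, _⟩ h
  simpa using h

/-- Cells are ordered by pointwise inclusion (the face order of the `Hom` complex). -/
instance : PartialOrder (HomCell A B) := PartialOrder.lift HomCell.η eta_injective

theorem le_def {c d : HomCell A B} : c ≤ d ↔ ∀ v, c.η v ⊆ d.η v := Iff.rfl

noncomputable instance [Finite V] [Finite W] : Fintype (HomCell A B) := by
  classical
  have : Finite (HomCell A B) := Finite.of_injective _ (eta_injective (A := A) (B := B))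
  exact Fintype.ofFinite _

noncomputable instance : DecidableEq (HomCell A B) := Classical.decEq _

/-- Precomposition with a graph homomorphism `φ : (U,A') → (V,A)`: the induced
cellular (monotone) map `Hom(V,W) → Hom(U,W)`; this is the contravariant functoriality
of `Hom(-,H)`. -/
def pull {A' : U → U → Prop} (φ : U → V) (hφ : ∀ ⦃x y⦄, A' x y → A (φ x) (φ y)) :
    HomCell A B →o HomCell A' B where
  toFun c :=
    { η := fun u => c.η (φ u)
      nonempty := fun u => c.nonempty (φ u)
      adj := fun _ _ hxy => c.adj (hφ hxy) }
  monotone' := fun _ _ h u => h (φ u)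

/-- Postcomposition with a graph homomorphism `φ : (V,B) → (W,B')`: the induced
cellular (monotone) map `Hom(U,V) → Hom(U,W)`; this is the covariant functoriality
of `Hom(G,-)`. -/
def push {U₀ V₀ W₀ : Type*} {A₀ : U₀ → U₀ → Prop} {B₀ : V₀ → V₀ → Prop}
    {B₀' : W₀ → W₀ → Prop} (φ : V₀ → W₀)
    (hφ : ∀ ⦃x y⦄, B₀ x y → B₀' (φ x) (φ y)) (c : HomCell A₀ B₀) : HomCell A₀ B₀' where
  η v := φ '' c.η v
  nonempty v := (c.nonempty v).image φ
  adj := by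
    rintro x y hxy a ⟨a', ha', rfl⟩ b ⟨b', hb', rfl⟩
    exact hφ (c.adj hxy a' ha' b' hb')

end HomCell

/-- The geometric realization of the order complex of a preorder `P`:
formal convex combinations supported on finite chains of `P`. -/
def OrderComplex (P : Type*) [Preorder P] : Type _ :=
  { f : P → ℝ // (∀ x, 0 ≤ f x) ∧ HasSum f 1 ∧ IsChain (· ≤ ·) {x | f x ≠ 0} }

instance (P : Type*) [Preorder P] : TopologicalSpace (OrderComplex P) :=
  instTopologicalSpaceSubtype

/-- The topological space underlying the Lovász complex `Hom(G,H)` for graphs given by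
adjacency relations `A`, `B`: the (realization of the) poset of multihomomorphism cells. -/
def HomComplex {V W : Type*} (A : V → V → Prop) (B : W → W → Prop) : Type _ :=
  OrderComplex (HomCell A B)

instance {V W : Type*} (A : V → V → Prop) (B : W → W → Prop) :
    TopologicalSpace (HomComplex A B) := instTopologicalSpaceSubtype

/-- The simplicial map on order complexes induced by a monotone map of posets:
barycentric pushforward of weights. -/
noncomputable def OrderHom.realize {P Q : Type*} [Preorder P] [Preorder Q] [Fintype P]
    [DecidableEq Q] (φ : P →o Q) : C(OrderComplex P, OrderComplex Q) where
  toFun x := by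
    refine ⟨fun q => ∑ p ∈ Finset.univ.filter (fun p => φ p = q), x.1 p, ?_, ?_, ?_⟩
    · intro q
      exact Finset.sum_nonneg fun p _ => x.2.1 p
    · have h1 : ∑ p, x.1 p = 1 := (hasSum_fintype x.1).unique x.2.2.1
      have key : ∀ q ∉ Finset.univ.image φ,
          (∑ p ∈ Finset.univ.filter (fun p => φ p = q), x.1 p) = 0 := by
        intro q hq
        apply Finset.sum_eq_zero
        intro p hp
        simp only [Finset.mem_filter] at hp
        exact absurd (Finset.mem_image.mpr ⟨p, Finset.mem_univ p, hp.2⟩) hq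
      have := hasSum_sum_of_ne_finset_zero (s := Finset.univ.image φ)
        (f := fun q => ∑ p ∈ Finset.univ.filter (fun p => φ p = q), x.1 p) (L := SummationFilter.unconditional _) key
      have h2 : (∑ q ∈ Finset.univ.image φ,
          ∑ p ∈ Finset.univ.filter (fun p => φ p = q), x.1 p) = ∑ p, x.1 p :=
        Finset.sum_fiberwise_of_maps_to
          (fun p _ => Finset.mem_image_of_mem φ (Finset.mem_univ p)) _
      rwa [h2, h1] at this
    · intro q1 hq1 q2 hq2 hne
      simp only [Set.mem_setOf_eq] at hq1 hq2
      obtain ⟨p1, hp1, hxp1⟩ : ∃ p, φ p = q1 ∧ x.1 p ≠ 0 := by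
        by_contra h
        push_neg at h
        exact hq1 (Finset.sum_eq_zero fun p hp => by
          simp only [Finset.mem_filter] at hp
          exact h p hp.2)
      obtain ⟨p2, hp2, hxp2⟩ : ∃ p, φ p = q2 ∧ x.1 p ≠ 0 := by
        by_contra h
        push_neg at h
        exact hq2 (Finset.sum_eq_zero fun p hp => by
          simp only [Finset.mem_filter] at hp
          exact h p hp.2)
      have hp12 : p1 ≠ p2 := fun h => hne (hp1 ▸ hp2 ▸ h ▸ rfl)
      rcases x.2.2.2 hxp1 hxp2 hp12 with h | h
      · exact Or.inl (hp1 ▸ hp2 ▸ φ.monotone h)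
      · exact Or.inr (hp2 ▸ hp1 ▸ φ.monotone h)
  continuous_toFun := by
    apply Continuous.subtype_mk
    apply continuous_pi
    intro q
    exact continuous_finset_sum _ fun p _ => (continuous_apply p).comp continuous_subtype_val


/-!
Colour `T` by the parity of the distance to `e 0`, where `e` is the chosen edge. The colouring
`c : T → K₂` is split by `e`, so `pull e ∘ pull c = id`, and it remains to see that the
retraction `e ∘ c` of `T` onto its edge induces a self-map of `Hom(T, G)` homotopic to the
identity. That retraction is an iterate of the fold `F` moving every vertex two steps towards
`e 0`. Two graph maps `f g : T → T` with `f x ~ g y` across every edge `x ~ y` span the cell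
`u ↦ {f u, g u}` of `Hom(T, T)`, and precomposing with it dominates both `pull f` and `pull g`;
comparable maps of posets have homotopic realizations, so `pull f ≃ pull g`. Truncating `F` to
the vertices at distance at least `t` gives such compatible pairs for consecutive `t`, joining
`F` (at `t = 0`) to the identity (for `t` beyond every distance).
-/

open Finset

theorem hasSum_sum_fiberwise {P Q α : Type*} [Fintype P] [DecidableEq Q] [AddCommMonoid α]
    [TopologicalSpace α] (g : P → Q) (f : P → α) :
    HasSum (fun q => ∑ p ∈ univ.filter (fun p => g p = q), f p) (∑ p, f p) := by
  rw [← sum_fiberwise_of_maps_to (t := univ.image g) fun p _ => mem_image_of_mem g (mem_univ p)]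
  refine hasSum_sum_of_ne_finset_zero fun q hq => sum_eq_zero fun p hp => ?_
  exact absurd (mem_image.mpr ⟨p, mem_univ p, (mem_filter.mp hp).2⟩) hq

theorem iterate_map_rel {V : Type*} {A : V → V → Prop} {f : V → V}
    (hf : ∀ ⦃x y⦄, A x y → A (f x) (f y)) (k : ℕ) :
    ∀ ⦃x y⦄, A x y → A (f^[k] x) (f^[k] y) := by
  induction k with
  | zero => exact fun _ _ h => h
  | succ k ih => exact fun _ _ h => by simpa only [Function.iterate_succ_apply'] using hf (ih h)

namespace OrderComplex

variable {P : Type*} [Preorder P]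

@[ext]
theorem ext {x y : OrderComplex P} (h : ∀ p, x.1 p = y.1 p) : x = y :=
  Subtype.ext (funext h)

theorem nonneg (x : OrderComplex P) (p : P) : 0 ≤ x.1 p :=
  x.2.1 p

theorem isChain_support (x : OrderComplex P) : IsChain (· ≤ ·) {p | x.1 p ≠ 0} :=
  x.2.2.2

variable [Fintype P]

theorem sum_eq_one (x : OrderComplex P) : ∑ p, x.1 p = 1 :=
  (hasSum_fintype x.1).unique x.2.2.1

open scoped Classical in
noncomputable def massAbove (x : OrderComplex P) (p : P) : ℝ :=
  ∑ r ∈ univ.filter (fun r => p < r), x.1 r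

theorem massAbove_nonneg (x : OrderComplex P) (p : P) : 0 ≤ massAbove x p :=
  sum_nonneg fun r _ => x.nonneg r

theorem add_massAbove_le_massAbove (x : OrderComplex P) {p₁ p₂ : P} (h : p₁ < p₂) :
    x.1 p₂ + massAbove x p₂ ≤ massAbove x p₁ := by
  classical
  rw [massAbove, massAbove, ← sum_insert (s := univ.filter (p₂ < ·)) (by simp)]
  refine sum_le_sum_of_subset_of_nonneg ?_ fun r _ _ => x.nonneg r
  intro r hr
  rcases mem_insert.mp hr with rfl | hr
  · simpa using h
  · simpa using h.trans (mem_filter.mp hr).2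

theorem add_massAbove_le_one (x : OrderComplex P) (p : P) : x.1 p + massAbove x p ≤ 1 := by
  classical
  rw [massAbove, ← sum_insert (s := univ.filter (p < ·)) (by simp)]
  exact (sum_le_sum_of_subset_of_nonneg (subset_univ _) fun r _ _ => x.nonneg r).trans_eq
    x.sum_eq_one

/-- Stacking the mass of `x` along its chain from the top down, the part of `x p` that lies
within the top `t` of the total mass. -/
noncomputable def topMass (t : ℝ) (x : OrderComplex P) (p : P) : ℝ :=
  min (x.1 p) (max 0 (t - massAbove x p))

theorem topMass_nonneg (t : ℝ) (x : OrderComplex P) (p : P) : 0 ≤ topMass t x p :=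
  le_min (x.nonneg p) (le_max_left _ _)

theorem topMass_le (t : ℝ) (x : OrderComplex P) (p : P) : topMass t x p ≤ x.1 p :=
  min_le_left _ _

theorem topMass_zero (x : OrderComplex P) (p : P) : topMass 0 x p = 0 := by
  rw [topMass, max_eq_left (by linarith [massAbove_nonneg x p]), min_eq_right (x.nonneg p)]

theorem topMass_one (x : OrderComplex P) (p : P) : topMass 1 x p = x.1 p :=
  min_eq_left (le_max_of_le_right (by linarith [add_massAbove_le_one x p]))

theorem topMass_eq_of_lt {t : ℝ} {x : OrderComplex P} {p₁ p₂ : P} (h : p₁ < p₂)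
    (h₁ : topMass t x p₁ ≠ 0) : topMass t x p₂ = x.1 p₂ := by
  have hlt : massAbove x p₁ < t := by
    by_contra! hle
    exact h₁ (le_antisymm (min_le_of_right_le (max_le le_rfl (by linarith)))
      (topMass_nonneg t x p₁))
  have := add_massAbove_le_massAbove x h
  exact min_eq_left (le_max_of_le_right (by linarith))

theorem ne_zero_of_topMass_ne_zero {t : ℝ} {x : OrderComplex P} {p : P}
    (h : topMass t x p ≠ 0) : x.1 p ≠ 0 :=
  fun hx => h (le_antisymm (hx ▸ topMass_le t x p) (topMass_nonneg t x p))

theorem ne_zero_of_sub_topMass_ne_zero {t : ℝ} {x : OrderComplex P} {p : P}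
    (h : x.1 p - topMass t x p ≠ 0) : x.1 p ≠ 0 := by
  intro hx
  have := topMass_nonneg t x p
  have := topMass_le t x p
  exact h (by linarith)

theorem le_of_sub_topMass_ne_zero {t : ℝ} {x : OrderComplex P} {p₁ p₂ : P}
    (h₁ : x.1 p₁ - topMass t x p₁ ≠ 0) (h₂ : topMass t x p₂ ≠ 0) : p₁ ≤ p₂ := by
  by_contra h₁₂
  have h₂₁ := (x.isChain_support.total (ne_zero_of_sub_topMass_ne_zero h₁)
    (ne_zero_of_topMass_ne_zero h₂)).resolve_left h₁₂
  exact h₁ (sub_eq_zero.mpr (topMass_eq_of_lt (h₂₁.lt_of_not_ge h₁₂) h₂).symm)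

theorem continuous_topMass (p : P) :
    Continuous fun z : unitInterval × OrderComplex P => topMass z.1 z.2 p := by
  have hx : ∀ r : P, Continuous fun z : unitInterval × OrderComplex P => z.2.1 r :=
    fun r => (continuous_apply r).comp (continuous_subtype_val.comp continuous_snd)
  unfold topMass massAbove
  fun_prop

end OrderComplex

namespace OrderHom

open OrderComplex

variable {P Q R : Type*} [Preorder P] [Preorder Q] [Preorder R] [Fintype P]

theorem realize_apply [DecidableEq Q] (φ : P →o Q) (x : OrderComplex P) (q : Q) :
    (φ.realize x).1 q = ∑ p ∈ univ.filter (fun p => φ p = q), x.1 p :=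
  rfl

theorem realize_id [DecidableEq P] : (OrderHom.id : P →o P).realize = ContinuousMap.id _ := by
  ext x q
  simp [realize_apply, filter_eq']

theorem realize_comp [Fintype Q] [DecidableEq Q] [DecidableEq R] (φ : Q →o R) (ψ : P →o Q) :
    (φ.comp ψ).realize = φ.realize.comp ψ.realize := by
  ext x r
  simp only [ContinuousMap.comp_apply, realize_apply]
  rw [sum_fiberwise_eq_sum_filter]
  simp

variable [DecidableEq Q]

/-- The mass carried from `φ` to `ψ` is an upper segment of the chain, so when `φ ≤ ψ` the
support stays a chain. -/
noncomputable def prismWeight (φ ψ : P →o Q) (t : ℝ) (x : OrderComplex P) (q : Q) : ℝ :=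
  ∑ p ∈ univ.filter (fun p => φ p = q), (x.1 p - topMass t x p) +
    ∑ p ∈ univ.filter (fun p => ψ p = q), topMass t x p

theorem prismWeight_nonneg (φ ψ : P →o Q) (t : ℝ) (x : OrderComplex P) (q : Q) :
    0 ≤ prismWeight φ ψ t x q :=
  add_nonneg (sum_nonneg fun p _ => sub_nonneg.mpr (topMass_le t x p))
    (sum_nonneg fun p _ => topMass_nonneg t x p)

theorem hasSum_prismWeight (φ ψ : P →o Q) (t : ℝ) (x : OrderComplex P) :
    HasSum (prismWeight φ ψ t x) 1 := by
  have h := (hasSum_sum_fiberwise φ fun p => x.1 p - topMass t x p).add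
    (hasSum_sum_fiberwise ψ (topMass t x))
  rwa [← sum_add_distrib, sum_congr rfl fun p _ => sub_add_cancel _ _, x.sum_eq_one] at h

theorem isChain_support_prismWeight {φ ψ : P →o Q} (h : φ ≤ ψ) (t : ℝ)
    (x : OrderComplex P) : IsChain (· ≤ ·) {q | prismWeight φ ψ t x q ≠ 0} := by
  set L := {p | x.1 p - topMass t x p ≠ 0}
  set U := {p | topMass t x p ≠ 0}
  have hL : IsChain (· ≤ ·) L := x.isChain_support.mono fun _ => ne_zero_of_sub_topMass_ne_zero
  have hU : IsChain (· ≤ ·) U := x.isChain_support.mono fun _ => ne_zero_of_topMass_ne_zero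
  have hLU : IsChain (· ≤ ·) (φ '' L ∪ ψ '' U) := by
    refine isChain_union.mpr ⟨φ.monotone.isChain_image hL, ψ.monotone.isChain_image hU, ?_⟩
    rintro _ ⟨p₁, h₁, rfl⟩ _ ⟨p₂, h₂, rfl⟩ -
    exact Or.inl ((φ.monotone (le_of_sub_topMass_ne_zero h₁ h₂)).trans (h p₂))
  refine hLU.mono fun q (hq : prismWeight φ ψ t x q ≠ 0) => ?_
  by_cases hφ : ∑ p ∈ univ.filter (fun p => φ p = q), (x.1 p - topMass t x p) = 0
  · rw [prismWeight, hφ, zero_add] at hq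
    obtain ⟨p, hp, hpq⟩ := exists_ne_zero_of_sum_ne_zero hq
    exact Or.inr ⟨p, hpq, (mem_filter.mp hp).2⟩
  · obtain ⟨p, hp, hpq⟩ := exists_ne_zero_of_sum_ne_zero hφ
    exact Or.inl ⟨p, hpq, (mem_filter.mp hp).2⟩

noncomputable def prismHomotopy {φ ψ : P →o Q} (h : φ ≤ ψ) :
    ContinuousMap.Homotopy φ.realize ψ.realize where
  toFun z := ⟨prismWeight φ ψ z.1 z.2, prismWeight_nonneg φ ψ _ _,
    hasSum_prismWeight φ ψ _ _, isChain_support_prismWeight h _ _⟩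
  continuous_toFun := by
    refine Continuous.subtype_mk (continuous_pi fun q => ?_) _
    have hx : ∀ r : P, Continuous fun z : unitInterval × OrderComplex P => z.2.1 r :=
      fun r => (continuous_apply r).comp (continuous_subtype_val.comp continuous_snd)
    have := continuous_topMass (P := P)
    unfold prismWeight
    fun_prop
  map_zero_left x := by
    ext q
    simp [prismWeight, topMass_zero, realize_apply]
  map_one_left x := by
    ext q
    simp [prismWeight, topMass_one, realize_apply]

theorem realize_homotopic_of_le {φ ψ : P →o Q} (h : φ ≤ ψ) :
    φ.realize.Homotopic ψ.realize :=
  ⟨prismHomotopy h⟩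

end OrderHom

namespace HomCell

variable {U V W : Type*} {A' : U → U → Prop} {A : V → V → Prop} {B : W → W → Prop}

theorem pull_id : pull (B := B) id (fun _ _ h => h : ∀ ⦃x y⦄, A x y → A (id x) (id y)) =
    OrderHom.id :=
  rfl

theorem pull_comp_pull {U'' : Type*} {A'' : U'' → U'' → Prop} {f : U → V} {g : U'' → U}
    (hf : ∀ ⦃x y⦄, A' x y → A (f x) (f y))
    (hg : ∀ ⦃x y⦄, A'' x y → A' (g x) (g y)) :
    (pull (B := B) g hg).comp (pull f hf) = pull (f ∘ g) fun _ _ h => hf (hg h) :=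
  rfl

theorem pull_congr {f g : U → V} (hf : ∀ ⦃x y⦄, A' x y → A (f x) (f y))
    (hg : ∀ ⦃x y⦄, A' x y → A (g x) (g y)) (h : ∀ u, f u = g u) :
    pull (B := B) f hf = pull g hg := by
  obtain rfl : f = g := funext h
  rfl

def pullSup (f g : U → V) (hf : ∀ ⦃x y⦄, A' x y → A (f x) (f y))
    (hg : ∀ ⦃x y⦄, A' x y → A (g x) (g y)) (hfg : ∀ ⦃x y⦄, A' x y → A (f x) (g y))
    (hgf : ∀ ⦃x y⦄, A' x y → A (g x) (f y)) : HomCell A B →o HomCell A' B where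
  toFun c :=
    { η := fun u => c.η (f u) ∪ c.η (g u)
      nonempty := fun u => (c.nonempty (f u)).inl
      adj := by
        rintro x y hxy a (ha | ha) b (hb | hb)
        exacts [c.adj (hf hxy) a ha b hb, c.adj (hfg hxy) a ha b hb,
          c.adj (hgf hxy) a ha b hb, c.adj (hg hxy) a ha b hb] }
  monotone' _ _ h _ := Set.union_subset_union (h _) (h _)

variable [Finite V] [Finite W]

theorem realize_pull_homotopic {f g : U → V} (hf : ∀ ⦃x y⦄, A' x y → A (f x) (f y))
    (hg : ∀ ⦃x y⦄, A' x y → A (g x) (g y)) (hfg : ∀ ⦃x y⦄, A' x y → A (f x) (g y))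
    (hgf : ∀ ⦃x y⦄, A' x y → A (g x) (f y)) :
    (pull (B := B) f hf).realize.Homotopic (pull g hg).realize :=
  (OrderHom.realize_homotopic_of_le (ψ := pullSup f g hf hg hfg hgf)
      fun _ _ => Set.subset_union_left).trans
    (OrderHom.realize_homotopic_of_le fun _ _ => Set.subset_union_right).symm

theorem realize_pull_homotopic_of_succ (f : ℕ → U → V)
    (hf : ∀ k ⦃x y⦄, A' x y → A (f k x) (f k y))
    (hsucc : ∀ k ⦃x y⦄, A' x y → A (f k x) (f (k + 1) y))
    (hsucc' : ∀ k ⦃x y⦄, A' x y → A (f (k + 1) x) (f k y)) (m : ℕ) :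
    (pull (B := B) (f 0) (hf 0)).realize.Homotopic (pull (f m) (hf m)).realize := by
  induction m with
  | zero => exact .refl _
  | succ m ih => exact ih.trans (realize_pull_homotopic _ _ (hsucc m) (hsucc' m))

theorem realize_pull_iterate_homotopic_id {f : V → V}
    (hf : ∀ ⦃x y⦄, A x y → A (f x) (f y))
    (h : (pull (B := B) f hf).realize.Homotopic (ContinuousMap.id _)) (k : ℕ) :
    (pull (B := B) f^[k] (iterate_map_rel hf k)).realize.Homotopic (ContinuousMap.id _) := by
  induction k with
  | zero => rw [show pull (B := B) f^[0] _ = OrderHom.id from rfl, OrderHom.realize_id]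
  | succ k ih =>
    rw [show pull (B := B) f^[k + 1] _ = (pull f hf).comp (pull f^[k] _) from rfl,
      OrderHom.realize_comp]
    simpa using h.comp ih

end HomCell

namespace SimpleGraph

variable {V : Type*} {T : SimpleGraph V}

theorem Connected.dist_lt_card [Fintype V] (hG : T.Connected) (u v : V) :
    T.dist u v < Fintype.card V := by
  obtain ⟨p, hp, hpl⟩ := (hG u v).exists_path_of_dist
  exact hpl ▸ hp.length_lt

theorem Connected.exists_adj_dist_add_one_eq (hG : T.Connected) (r : V) {v : V}
    (hv : 0 < T.dist r v) : ∃ w, T.Adj v w ∧ T.dist r w + 1 = T.dist r v := by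
  have hvr : v ≠ r := by rintro rfl; simp at hv
  obtain ⟨p, hp⟩ := (hG.preconnected v r).exists_walk_length_eq_dist
  obtain ⟨w, hvw, q, rfl⟩ := p.exists_eq_cons_of_ne hvr
  refine ⟨w, hvw, le_antisymm ?_ ?_⟩
  · rw [SimpleGraph.dist_comm, SimpleGraph.dist_comm (u := r), ← hp, Walk.length_cons]
    exact Nat.add_le_add_right (SimpleGraph.dist_le q) 1
  · rw [← SimpleGraph.dist_eq_one_iff_adj.mpr hvw.symm]
    exact hG.dist_triangle

noncomputable def Connected.parent (hG : T.Connected) (r v : V) : V :=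
  if hv : 0 < T.dist r v then (hG.exists_adj_dist_add_one_eq r hv).choose else v

namespace Connected

variable (hG : T.Connected) {r v : V}

theorem adj_parent (hv : 0 < T.dist r v) : T.Adj v (hG.parent r v) := by
  rw [parent, dif_pos hv]
  exact (hG.exists_adj_dist_add_one_eq r hv).choose_spec.1

theorem dist_parent_add_one (hv : 0 < T.dist r v) :
    T.dist r (hG.parent r v) + 1 = T.dist r v := by
  rw [parent, dif_pos hv]
  exact (hG.exists_adj_dist_add_one_eq r hv).choose_spec.2

end Connected

theorem IsAcyclic.eq_penultimate_of_dist_add_one_eq (hG : T.IsAcyclic) {r x y : V}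
    {q : T.Walk r y} (hq : q.IsPath) (hrx : T.Reachable r x) (hxy : T.Adj x y)
    (h : T.dist r x + 1 = T.dist r y) : x = q.penultimate := by
  classical
  obtain ⟨p, hp, hpl⟩ := hrx.exists_path_of_dist
  have hx : x ∈ q.support := by
    by_contra hx
    have hy := hG.mem_support_of_ne_mem_support_of_adj_of_isPath hp hq hxy hx
    have := (SimpleGraph.dist_le (p.takeUntil y hy)).trans (p.length_takeUntil_le_length hy)
    omega
  exact hG.eq_penultimate_of_adj_end hq hxy.symm hx

theorem IsTree.eq_of_adj_of_dist_add_one_eq (hT : T.IsTree) (r : V) {x x' y : V}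
    (hx : T.Adj x y) (hx' : T.Adj x' y) (h : T.dist r x + 1 = T.dist r y)
    (h' : T.dist r x' + 1 = T.dist r y) : x = x' := by
  obtain ⟨q, hq, -⟩ := (hT.connected r y).exists_path_of_dist
  rw [hT.isAcyclic.eq_penultimate_of_dist_add_one_eq hq (hT.connected r x) hx h,
    hT.isAcyclic.eq_penultimate_of_dist_add_one_eq hq (hT.connected r x') hx' h']

theorem IsTree.parent_eq (hT : T.IsTree) {r x y : V} (hxy : T.Adj x y)
    (h : T.dist r x + 1 = T.dist r y) : hT.connected.parent r y = x :=
  hT.eq_of_adj_of_dist_add_one_eq r (hT.connected.adj_parent (by omega)).symm hxy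
    (hT.connected.dist_parent_add_one (by omega)) h

theorem adj_apply_of_adj_zero_one {e : Fin 2 → V} (he : T.Adj (e 0) (e 1)) ⦃x y : Fin 2⦄
    (hxy : (⊤ : SimpleGraph (Fin 2)).Adj x y) : T.Adj (e x) (e y) := by
  fin_cases x <;> fin_cases y <;> simp_all [he.symm]

namespace IsTree

variable (hT : T.IsTree) (e : Fin 2 → V)

theorem coloringTwoOfVert_val (u v : V) : (hT.coloringTwoOfVert u v : ℕ) = T.dist u v % 2 :=
  rfl

noncomputable def retractToEdge (v : V) : V :=
  e (hT.coloringTwoOfVert (e 0) v)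

noncomputable def fold (v : V) : V :=
  if 2 ≤ T.dist (e 0) v then hT.connected.parent (e 0) (hT.connected.parent (e 0) v)
  else hT.retractToEdge e v

noncomputable def truncatedFold (t : ℕ) (v : V) : V :=
  if t ≤ T.dist (e 0) v then hT.fold e v else v

theorem truncatedFold_zero (v : V) : hT.truncatedFold e 0 v = hT.fold e v :=
  if_pos (Nat.zero_le _)

theorem truncatedFold_of_lt {t : ℕ} {v : V} (h : T.dist (e 0) v < t) :
    hT.truncatedFold e t v = v :=
  if_neg h.not_ge

theorem fold_of_dist_eq_zero {v : V} (h : T.dist (e 0) v = 0) : hT.fold e v = e 0 := by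
  rw [fold, if_neg (by omega), retractToEdge, (hT.connected.dist_eq_zero_iff.mp h).symm]
  congr
  ext
  simp [coloringTwoOfVert_val]

theorem fold_of_dist_eq_one {v : V} (h : T.dist (e 0) v = 1) : hT.fold e v = e 1 := by
  rw [fold, if_neg (by omega), retractToEdge]
  congr
  ext
  simp [coloringTwoOfVert_val, h]

variable {e} (he : T.Adj (e 0) (e 1))
include he

theorem coloringTwoOfVert_edge (c : Fin 2) : hT.coloringTwoOfVert (e 0) (e c) = c := by
  fin_cases c <;> ext <;> simp [coloringTwoOfVert_val, dist_eq_one_iff_adj.mpr he]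

theorem adj_fold_of_dist_add_one_eq {x y : V} (hxy : T.Adj x y)
    (h : T.dist (e 0) x + 1 = T.dist (e 0) y) : T.Adj x (hT.fold e y) := by
  by_cases hy : 2 ≤ T.dist (e 0) y
  · rw [fold, if_pos hy, hT.parent_eq hxy h]
    exact hT.connected.adj_parent (by omega)
  · rw [hT.fold_of_dist_eq_one e (by omega),
      ← hT.connected.dist_eq_zero_iff.mp (by omega : T.dist (e 0) x = 0)]
    exact he

theorem adj_fold_fold_of_dist_add_one_eq {x y : V} (hxy : T.Adj x y)
    (h : T.dist (e 0) x + 1 = T.dist (e 0) y) : T.Adj (hT.fold e x) (hT.fold e y) := by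
  obtain hx | hx | hx : T.dist (e 0) x = 0 ∨ T.dist (e 0) x = 1 ∨ 2 ≤ T.dist (e 0) x := by
    omega
  · rw [hT.fold_of_dist_eq_zero e hx, hT.fold_of_dist_eq_one e (by omega)]
    exact he
  · have hp := hT.connected.dist_parent_add_one (r := e 0) (v := x) (by omega)
    have hp0 : T.dist (e 0) (hT.connected.parent (e 0) x) = 0 := by omega
    rw [hT.fold_of_dist_eq_one e hx, fold, if_pos (by omega), hT.parent_eq hxy h,
      ← hT.connected.dist_eq_zero_iff.mp hp0]
    exact he.symm
  · have hp := hT.connected.dist_parent_add_one (r := e 0) (v := x) (by omega)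
    rw [fold, if_pos hx, fold, if_pos (by omega), hT.parent_eq hxy h]
    exact (hT.connected.adj_parent (by omega)).symm

theorem adj_truncatedFold {a b : ℕ} (hab : a ≤ b + 1) (hba : b ≤ a + 1) ⦃x y : V⦄
    (hxy : T.Adj x y) : T.Adj (hT.truncatedFold e a x) (hT.truncatedFold e b y) := by
  suffices ∀ {a b x y}, b ≤ a + 1 → T.Adj x y → T.dist (e 0) x + 1 = T.dist (e 0) y →
      T.Adj (hT.truncatedFold e a x) (hT.truncatedFold e b y) by
    rcases hT.dist_eq_dist_add_one_of_adj (e 0) hxy with h | h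
    · exact (this hab hxy.symm h.symm).symm
    · exact this hba hxy h.symm
  intro a b x y hba hxy h
  unfold truncatedFold
  split_ifs with hx hy hy
  · exact hT.adj_fold_fold_of_dist_add_one_eq he hxy h
  · omega
  · exact hT.adj_fold_of_dist_add_one_eq he hxy h
  · exact hxy

theorem adj_fold ⦃x y : V⦄ (hxy : T.Adj x y) : T.Adj (hT.fold e x) (hT.fold e y) := by
  simpa [truncatedFold] using hT.adj_truncatedFold (a := 0) (b := 0) he le_self_add le_self_add hxy

theorem retractToEdge_fold (v : V) :
    hT.retractToEdge e (hT.fold e v) = hT.retractToEdge e v := by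
  by_cases hv : 2 ≤ T.dist (e 0) v
  · have hp := hT.connected.dist_parent_add_one (r := e 0) (v := v) (by omega)
    have hpp := hT.connected.dist_parent_add_one (r := e 0) (v := hT.connected.parent (e 0) v)
      (by omega)
    rw [fold, if_pos hv, retractToEdge, retractToEdge]
    congr 1
    ext
    simp only [coloringTwoOfVert_val]
    omega
  · rw [fold, if_neg hv]
    exact congrArg e (hT.coloringTwoOfVert_edge he _)

theorem iterate_fold {k : ℕ} {v : V} (hv : T.dist (e 0) v ≤ k + 1) :
    (hT.fold e)^[k + 1] v = hT.retractToEdge e v := by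
  induction k generalizing v with
  | zero => exact if_neg (by omega)
  | succ k ih =>
    rw [Function.iterate_succ_apply, ih, hT.retractToEdge_fold he]
    by_cases h : 2 ≤ T.dist (e 0) v
    · have hp := hT.connected.dist_parent_add_one (r := e 0) (v := v) (by omega)
      have hpp := hT.connected.dist_parent_add_one (r := e 0) (v := hT.connected.parent (e 0) v)
        (by omega)
      rw [fold, if_pos h]
      omega
    · have hedge : ∀ c : Fin 2, T.dist (e 0) (e c) ≤ 1 := by
        intro c
        fin_cases c <;> simp [dist_eq_one_iff_adj.mpr he]
      rw [fold, if_neg h, retractToEdge]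
      exact (hedge _).trans (by omega)

theorem adj_retractToEdge ⦃x y : V⦄ (hxy : T.Adj x y) :
    T.Adj (hT.retractToEdge e x) (hT.retractToEdge e y) := by
  have h := iterate_map_rel (hT.adj_fold he) (T.dist (e 0) x + T.dist (e 0) y + 1) hxy
  rwa [hT.iterate_fold he (by omega), hT.iterate_fold he (by omega)] at h

variable [Fintype V] {W : Type*} [Finite W] {B : W → W → Prop}

theorem realize_pull_fold_homotopic_id :
    (HomCell.pull (B := B) (hT.fold e) (hT.adj_fold he)).realize.Homotopic
      (ContinuousMap.id _) := by
  have h := HomCell.realize_pull_homotopic_of_succ (B := B) (hT.truncatedFold e)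
    (fun _ => hT.adj_truncatedFold he (by omega) (by omega))
    (fun _ => hT.adj_truncatedFold he (by omega) (by omega))
    (fun _ => hT.adj_truncatedFold he (by omega) (by omega)) (Fintype.card V)
  rwa [HomCell.pull_congr _ (hT.adj_fold he) (hT.truncatedFold_zero e),
    HomCell.pull_congr (f := hT.truncatedFold e (Fintype.card V)) (g := id) _ (fun _ _ h => h)
      fun v => hT.truncatedFold_of_lt e (hT.connected.dist_lt_card _ v),
    HomCell.pull_id, OrderHom.realize_id] at h

theorem realize_pull_retractToEdge_homotopic_id :
    (HomCell.pull (B := B) (hT.retractToEdge e) (hT.adj_retractToEdge he)).realize.Homotopic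
      (ContinuousMap.id _) := by
  obtain ⟨k, hk⟩ := Nat.exists_eq_add_one_of_ne_zero (Fintype.card_pos_iff.mpr ⟨e 0⟩).ne'
  rw [HomCell.pull_congr _ (iterate_map_rel (hT.adj_fold he) (k + 1)) fun v =>
    (hT.iterate_fold he (hk ▸ hT.connected.dist_lt_card _ v).le).symm]
  exact HomCell.realize_pull_iterate_homotopic_id _ (hT.realize_pull_fold_homotopic_id he) _

noncomputable def homotopyEquivOfAdj :
    ContinuousMap.HomotopyEquiv (OrderComplex (HomCell T.Adj B))
      (OrderComplex (HomCell (⊤ : SimpleGraph (Fin 2)).Adj B)) where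
  toFun := (HomCell.pull e (adj_apply_of_adj_zero_one he)).realize
  invFun := (HomCell.pull (hT.coloringTwoOfVert (e 0)) fun _ _ h =>
    (hT.coloringTwoOfVert (e 0)).map_rel h).realize
  left_inv := by
    rw [← OrderHom.realize_comp, HomCell.pull_comp_pull]
    exact hT.realize_pull_retractToEdge_homotopic_id he
  right_inv := by
    rw [← OrderHom.realize_comp, HomCell.pull_comp_pull,
      HomCell.pull_congr (f := hT.coloringTwoOfVert (e 0) ∘ e) (g := id) _ (fun _ _ h => h)
        (hT.coloringTwoOfVert_edge he),
      HomCell.pull_id, OrderHom.realize_id]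

end IsTree

end SimpleGraph

/-- **Babson–Kozlov**: if `T` is a tree with at least one edge, then any inclusion
`i : K₂ ↪ T` of an edge induces a homotopy equivalence
`Hom(T, K_n) → Hom(K₂, K_n)`. -/
theorem tree_homotopyEquiv_homK2 {V : Type*} [Fintype V] (T : SimpleGraph V)
    (hT : T.IsTree) (n : ℕ) (i : Fin 2 → V)
    (hi : ∀ ⦃x y : Fin 2⦄, (⊤ : SimpleGraph (Fin 2)).Adj x y → T.Adj (i x) (i y)) :
    ∃ e : ContinuousMap.HomotopyEquiv (HomComplex T.Adj (⊤ : SimpleGraph (Fin n)).Adj)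
        (HomComplex (⊤ : SimpleGraph (Fin 2)).Adj (⊤ : SimpleGraph (Fin n)).Adj),
      ⇑e.toFun = ⇑(HomCell.pull (B := (⊤ : SimpleGraph (Fin n)).Adj) i hi).realize :=
  ⟨hT.homotopyEquivOfAdj (hi (by simp)), rfl⟩
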